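/- For every A ∈ SI_5 with Me(A) ≥ 4, every n ≥ 3, and every nonempty even subgraph J of the wheel W_n, the wheel W_n admits a σ_{J,A}-faithful flow, i.e. a modular 5-flow f on W_n with f(e) ∈ A for every edge e ∈ J and f(e) ∈ (1,4) for every edge e ∉ J. (Consequently, every graph in the family (W_n, J_A) has circular flow number strictly less than 5.) -/

import Mathlib

open scoped Classical

/-- A finite multigraph: finite vertex and edge types together with a reference
orientation recorded by source and target maps.  The underlying undirected graph
is obtained by forgetting the directions; reorienting an edge corresponds to
negating the value of a flow on it. -/
structure Multigraph where
  V : Type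
  E : Type
  [fintypeV : Fintype V]
  [fintypeE : Fintype E]
  src : E → V
  tgt : E → V

attribute [instance] Multigraph.fintypeV Multigraph.fintypeE

namespace Multigraph

/-- `f` is a flow with respect to the reference orientation: at every vertex the
sum of the values on incoming edges equals the sum on outgoing edges. -/
def IsFlow (G : Multigraph) {M : Type*} [AddCommMonoid M] (f : G.E → M) : Prop :=
  ∀ v : G.V, (∑ e : G.E, Set.indicator {e' : G.E | G.tgt e' = v} f e)
           = ∑ e : G.E, Set.indicator {e' : G.E | G.src e' = v} f e

/-- The edge `e` joins the vertices `v` and `w` (in either direction). -/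
def Joins (G : Multigraph) (e : G.E) (v w : G.V) : Prop :=
  (G.src e = v ∧ G.tgt e = w) ∨ (G.src e = w ∧ G.tgt e = v)

/-- `v` and `w` are adjacent: some edge joins them. -/
def Adj (G : Multigraph) (v w : G.V) : Prop := ∃ e : G.E, G.Joins e v w

/-- The degree of a vertex (loops count twice). -/
noncomputable def degree (G : Multigraph) (v : G.V) : ℕ :=
  Nat.card {e : G.E // G.src e = v} + Nat.card {e : G.E // G.tgt e = v}

/-- A set of edges is an even subgraph if every vertex is incident with an even
number of its edges (loops counting twice). -/
def IsEvenSubgraph (G : Multigraph) (J : Set G.E) : Prop :=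
  ∀ v : G.V, Even (Nat.card {e : G.E // e ∈ J ∧ G.src e = v}
    + Nat.card {e : G.E // e ∈ J ∧ G.tgt e = v})

/-- `G` has a circular nowhere-zero `r`-flow: for some orientation (encoded by
possibly negating values with respect to the reference orientation) there is a
real-valued flow with all values in `[1, r-1]`. -/
def HasCNZF (G : Multigraph) (r : ℝ) : Prop :=
  ∃ f : G.E → ℝ, G.IsFlow f ∧
    ∀ e : G.E, f e ∈ Set.Icc 1 (r - 1) ∨ -f e ∈ Set.Icc 1 (r - 1)

/-- The circular flow number `Φ_c(G)`, as an extended real (`⊤` if no `r`-CNZF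
exists for any `r ≥ 2`). -/
noncomputable def flowNumber (G : Multigraph) : EReal :=
  sInf {x : EReal | ∃ r : ℝ, x = (r : EReal) ∧ 2 ≤ r ∧ G.HasCNZF r}

/-- `G` has a modular circular nowhere-zero `r`-flow: a flow with values in
`ℝ/rℤ` lying (up to reorientation) in the image of `[1, r-1]`. -/
def HasMCNZF (G : Multigraph) (r : ℝ) : Prop :=
  ∃ f : G.E → AddCircle r, G.IsFlow f ∧
    ∀ e : G.E, f e ∈ (fun t : ℝ => (t : AddCircle r)) '' Set.Icc 1 (r - 1) ∨
      -f e ∈ (fun t : ℝ => (t : AddCircle r)) '' Set.Icc 1 (r - 1)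

/-- `G` has a sub-`r`-MCNZF: an `r`-MCNZF all of whose values lie in the image
of the open interval `(1, r-1)`. -/
def HasSubMCNZF (G : Multigraph) (r : ℝ) : Prop :=
  ∃ f : G.E → AddCircle r, G.IsFlow f ∧
    ∀ e : G.E, f e ∈ (fun t : ℝ => (t : AddCircle r)) '' Set.Ioo 1 (r - 1) ∨
      -f e ∈ (fun t : ℝ => (t : AddCircle r)) '' Set.Ioo 1 (r - 1)

end Multigraph

/-- The right endpoint representative: the representative of `b` in `(a, a+5]`. -/
def arcEnd (a b : ℤ) : ℤ := a + (if (b - a) % 5 = 0 then 5 else (b - a) % 5)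

/-- The open integer arc `(a, b)` in `ℝ/5ℤ`: the image of the real interval
`(a, b')` where `b'` is the representative of `b` in `(a, a+5]`. -/
def arc (a b : ℤ) : Set (AddCircle (5 : ℝ)) :=
  (fun t : ℝ => (t : AddCircle (5 : ℝ))) '' Set.Ioo (a : ℝ) (arcEnd a b : ℝ)

/-- `SI_5`: the symmetric subsets of `ℝ/5ℤ` that are unions of open integer arcs. -/
def SI5 : Set (Set (AddCircle (5 : ℝ))) :=
  {A | (∀ z, z ∈ A ↔ -z ∈ A) ∧ ∃ s : Set (ℤ × ℤ), A = ⋃ p ∈ s, arc p.1 p.2}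

/-- The measure `Me A`: the number of (distinct) open unit arcs contained in `A`. -/
noncomputable def Me (A : Set (AddCircle (5 : ℝ))) : ℕ :=
  Set.ncard {B : Set (AddCircle (5 : ℝ)) | B ⊆ A ∧ ∃ k : ℤ, B = arc k (k + 1)}

namespace Multigraph

/-- `G⁺_{xy}`: the graph `G` with one extra edge `e⁺` from `x` to `y`. -/
def addEdge (G : Multigraph) (x y : G.V) : Multigraph where
  V := G.V
  E := Option G.E
  src := fun e => e.elim x G.src
  tgt := fun e => e.elim y G.tgt

/-- The open 5-capacity of the generalised edge `G_{xy}`: all values that can pass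
from `x` to `y` through `G` by a modular 5-flow of `G⁺_{xy}` whose values on the
edges of `G` lie in the open arc `(1,4)`. -/
def CP5 (G : Multigraph) (x y : G.V) : Set (AddCircle (5 : ℝ)) :=
  {w | ∃ f : Option G.E → AddCircle (5 : ℝ),
    (G.addEdge x y).IsFlow f ∧ (∀ e : G.E, f (some e) ∈ arc 1 4) ∧ f none = w}

/-- `G` has a sub-5-MCNZF: a modular 5-flow with all values in the open arc `(1,4)`. -/
def HasSub5 (G : Multigraph) : Prop :=
  ∃ f : G.E → AddCircle (5 : ℝ), G.IsFlow f ∧ ∀ e : G.E, f e ∈ arc 1 4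

/-- `G` has a `σ`-faithful flow: a modular 5-flow `f` with `f e ∈ σ e` for all `e`. -/
def HasFaithful (G : Multigraph) (σ : G.E → Set (AddCircle (5 : ℝ))) : Prop :=
  ∃ f : G.E → AddCircle (5 : ℝ), G.IsFlow f ∧ ∀ e : G.E, f e ∈ σ e

/-- `G` has a `σ_{J,A}`-faithful flow: a modular 5-flow with values in `A` on the
edges of `J` and in the open arc `(1,4)` on all other edges. -/
def HasFaithfulOn (G : Multigraph) (J : Set G.E) (A : Set (AddCircle (5 : ℝ))) : Prop :=
  ∃ f : G.E → AddCircle (5 : ℝ), G.IsFlow f ∧ (∀ e ∈ J, f e ∈ A) ∧ ∀ e ∉ J, f e ∈ arc 1 4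

end Multigraph

/-- Cyclic successor on `Fin n`. -/
def rot (n : ℕ) (i : Fin n) : Fin n := ⟨(i.val + 1) % n, Nat.mod_lt _ i.pos⟩

/-- The wheel `W_n`: the external cycle `v_1 … v_n` (vertices `some i`, rim edges
`Sum.inl i` from `v_i` to `v_{i+1}`) together with a hub `v_c = none` joined to
every rim vertex by the spokes `Sum.inr i`. -/
def wheel (n : ℕ) : Multigraph where
  V := Option (Fin n)
  E := Fin n ⊕ Fin n
  src := fun e => match e with
    | Sum.inl i => some i
    | Sum.inr _ => none
  tgt := fun e => match e with
    | Sum.inl i => some (rot n i)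
    | Sum.inr i => some i


section AuxProof

/-! ### Auxiliary lemmas for the main theorem -/

lemma q5_shift (x : ℝ) (m : ℤ) : ((x + 5*m : ℝ) : AddCircle (5:ℝ)) = (x : AddCircle (5:ℝ)) := by
  have hm : (x + 5*m) - x ∈ AddSubgroup.zmultiples (5:ℝ) := by
    refine ⟨m, ?_⟩
    show m • (5:ℝ) = x + 5*m - x
    rw [zsmul_eq_mul]
    ring
  exact QuotientAddGroup.eq_iff_sub_mem.mpr hm

lemma q5_eq (x y : ℝ) (h : x = y + 5) : (x : AddCircle (5:ℝ)) = (y : AddCircle (5:ℝ)) := by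
  have := q5_shift y 1
  rw [show y + 5*(1:ℤ) = x by push_cast; linarith] at this
  exact this

lemma coe_sub5 (x y : ℝ) :
    (x : AddCircle (5:ℝ)) - (y : AddCircle (5:ℝ)) = ((x - y : ℝ) : AddCircle (5:ℝ)) :=
  (map_sub (QuotientAddGroup.mk' (AddSubgroup.zmultiples (5:ℝ))) x y).symm

lemma coe_neg5 (x : ℝ) : -(x : AddCircle (5:ℝ)) = ((-x : ℝ) : AddCircle (5:ℝ)) :=
  (map_neg (QuotientAddGroup.mk' (AddSubgroup.zmultiples (5:ℝ))) x).symm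

lemma arcEnd_one (a : ℤ) : arcEnd a (a+1) = a + 1 := by
  unfold arcEnd
  rw [show a + 1 - a = 1 by ring]
  norm_num

lemma mem_arc (a b : ℤ) (t : ℝ) (h1 : (a:ℝ) < t) (h2 : t < ((arcEnd a b : ℤ) : ℝ)) :
    (t : AddCircle (5:ℝ)) ∈ arc a b := ⟨t, ⟨h1, h2⟩, rfl⟩

lemma arc_mod (k : ℤ) : arc k (k+1) = arc (k % 5) (k % 5 + 1) := by
  have e1 : arcEnd k (k+1) = k + 1 := arcEnd_one k
  have e2 : arcEnd (k%5) (k%5+1) = k%5 + 1 := arcEnd_one _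
  have hdiv := Int.emod_add_mul_ediv k 5
  have hdiv' : ((k % 5 : ℤ) : ℝ) + 5 * ((k/5:ℤ):ℝ) = (k:ℝ) := by exact_mod_cast hdiv
  have hcast : ((k % 5 : ℤ) : ℝ) = (k:ℝ) - 5*((k/5 : ℤ):ℝ) := by linarith
  unfold arc
  rw [e1, e2]
  ext z
  simp only [Set.mem_image, Set.mem_Ioo]
  constructor
  · rintro ⟨t, ⟨ht1, ht2⟩, rfl⟩
    refine ⟨t - 5*((k/5 : ℤ):ℝ), ⟨by rw [hcast]; linarith, ?_⟩, ?_⟩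
    · push_cast
      rw [hcast]
      push_cast at ht2
      linarith
    · have := q5_shift (t - 5*((k/5 : ℤ):ℝ)) (k/5)
      rw [show t - 5*((k/5 : ℤ):ℝ) + 5*((k/5:ℤ):ℝ) = t by ring] at this
      exact this.symm
  · rintro ⟨t, ⟨ht1, ht2⟩, rfl⟩
    refine ⟨t + 5*((k/5 : ℤ):ℝ), ⟨?_, ?_⟩, ?_⟩
    · rw [hcast] at ht1; linarith
    · push_cast at ht2 ⊢
      rw [hcast] at ht2
      linarith
    · exact q5_shift t (k/5)

lemma sym_get (A : Set (AddCircle (5:ℝ))) (hsym : ∀ z, z ∈ A ↔ -z ∈ A) (r : ℤ)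
    (h : arc (4 - r) (5 - r) ⊆ A) : arc r (r+1) ⊆ A := by
  intro z hz
  obtain ⟨t, ht, rfl⟩ := hz
  rw [arcEnd_one] at ht
  apply (hsym _).mpr
  rw [coe_neg5]
  have hco : ((-t : ℝ) : AddCircle (5:ℝ)) = ((5 - t : ℝ) : AddCircle (5:ℝ)) :=
    (q5_eq (5 - t) (-t) (by ring)).symm
  rw [hco]
  apply h
  have hend : arcEnd (4 - r) (5 - r) = 5 - r := by
    unfold arcEnd
    rw [show 5 - r - (4 - r) = 1 by ring]
    norm_num
    ring
  refine ⟨5 - t, ⟨?_, ?_⟩, rfl⟩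
  · push_cast
    have := ht.2
    push_cast at this
    linarith
  · rw [hend]
    push_cast
    have := ht.1
    push_cast at this
    linarith

lemma A_arcs (A : Set (AddCircle (5:ℝ))) (hA : A ∈ SI5) (hMe : 4 ≤ Me A) :
    arc 0 1 ⊆ A ∧ arc 1 2 ⊆ A ∧ arc 3 4 ⊆ A := by
  obtain ⟨hsym, -⟩ := hA
  have hcard : 4 ≤ Set.ncard
      {B : Set (AddCircle (5:ℝ)) | B ⊆ A ∧ ∃ k : ℤ, B = arc k (k + 1)} := hMe
  have tri : ∀ X Y Z : Set (AddCircle (5:ℝ)),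
      {B : Set (AddCircle (5:ℝ)) | B ⊆ A ∧ ∃ k : ℤ, B = arc k (k + 1)} ⊆ {X, Y, Z} → False := by
    intro X Y Z hsub
    have hle := Set.ncard_le_ncard hsub (Set.toFinite _)
    have h3 : ({X, Y, Z} : Set (Set (AddCircle (5:ℝ)))).ncard ≤ 3 := by
      refine le_trans (Set.ncard_insert_le _ _) ?_
      have h2 := Set.ncard_insert_le Y ({Z} : Set (Set (AddCircle (5:ℝ))))
      have h1 : ({Z} : Set (Set (AddCircle (5:ℝ)))).ncard = 1 := Set.ncard_singleton Z
      omega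
    omega
  have main : ∀ (r a b c : ℤ),
      (∀ m : ℤ, 0 ≤ m → m < 5 → m = r ∨ m = 4 - r ∨ m = a ∨ m = b ∨ m = c) →
      ¬ arc r (r+1) ⊆ A → ¬ arc (4 - r) (5 - r) ⊆ A → False := by
    intro r a b c hcov h1 h2
    apply tri (arc a (a+1)) (arc b (b+1)) (arc c (c+1))
    rintro B ⟨hBA, k, rfl⟩
    rw [arc_mod k] at hBA ⊢
    have hm0 : 0 ≤ k % 5 := by omega
    have hm5 : k % 5 < 5 := by omega
    rcases hcov (k % 5) hm0 hm5 with hc | hc | hc | hc | hc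
    · exact absurd (by rwa [hc] at hBA) h1
    · exact absurd (by rwa [hc, show (4 - r) + 1 = 5 - r by ring] at hBA) h2
    · rw [hc]; exact Set.mem_insert _ _
    · rw [hc]; exact Set.mem_insert_of_mem _ (Set.mem_insert _ _)
    · rw [hc]; exact Set.mem_insert_of_mem _ (Set.mem_insert_of_mem _ rfl)
  have get : ∀ (r a b c : ℤ),
      (∀ m : ℤ, 0 ≤ m → m < 5 → m = r ∨ m = 4 - r ∨ m = a ∨ m = b ∨ m = c) →
      arc r (r+1) ⊆ A := by
    intro r a b c hcov
    by_contra h1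
    exact main r a b c hcov h1 (fun h2 => h1 (sym_get A hsym r h2))
  have h01 := get 0 1 2 3 (by omega)
  have h12 := get 1 0 2 4 (by omega)
  have h34 := get 3 0 2 4 (by omega)
  rw [show (0:ℤ)+1 = 1 by norm_num] at h01
  rw [show (1:ℤ)+1 = 2 by norm_num] at h12
  rw [show (3:ℤ)+1 = 4 by norm_num] at h34
  exact ⟨h01, h12, h34⟩

lemma rot_eq (n : ℕ) (hn : 2 ≤ n) [NeZero n] (i : Fin n) : rot n i = i + 1 := by
  apply Fin.ext
  rw [Fin.add_def, Fin.val_one']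
  simp [rot, Nat.mod_eq_of_lt (show 1 < n by omega)]

lemma sub_one_val (n : ℕ) (hn : 2 ≤ n) [NeZero n] (k : Fin n) :
    (k - 1).val = if k.val = 0 then n - 1 else k.val - 1 := by
  rw [Fin.sub_def]
  have h1 : ((1:Fin n)).val = 1 := by
    rw [Fin.val_one']; exact Nat.mod_eq_of_lt (by omega)
  have hk := k.isLt
  simp only [h1]
  split <;> rename_i h
  · simp [h, Nat.mod_eq_of_lt (show n - 1 < n by omega)]
  · have : n - 1 + k.val = n + (k.val - 1) := by omega
    rw [this, Nat.add_mod_left, Nat.mod_eq_of_lt (by omega)]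

noncomputable def wflow (n : ℕ) [NeZero n] (r : Fin n → AddCircle (5:ℝ)) :
    Fin n ⊕ Fin n → AddCircle (5:ℝ) :=
  Sum.elim r (fun i => r i - r (i - 1))

lemma fin_sub_add_cancel (n : ℕ) [NeZero n] (j : Fin n) : j - 1 + 1 = j :=
  sub_add_cancel j 1

lemma wflow_isFlow (n : ℕ) (hn : 2 ≤ n) [NeZero n] (r : Fin n → AddCircle (5:ℝ)) :
    (wheel n).IsFlow (wflow n r) := by
  intro v
  have hsplit : ∀ g : (wheel n).E → AddCircle (5:ℝ),
      ∑ e : (wheel n).E, g e = ∑ i : Fin n, g (Sum.inl i) + ∑ i : Fin n, g (Sum.inr i) :=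
    fun g => Fintype.sum_sum_type g
  rw [hsplit, hsplit]
  match v with
  | none =>
    have T1 : ∑ i : Fin n,
        Set.indicator {e' : (wheel n).E | (wheel n).tgt e' = none} (wflow n r) (Sum.inl i) = 0 :=
      Finset.sum_eq_zero fun i _ => by
        apply Set.indicator_of_notMem; intro h; cases h
    have T2 : ∑ i : Fin n,
        Set.indicator {e' : (wheel n).E | (wheel n).tgt e' = none} (wflow n r) (Sum.inr i) = 0 :=
      Finset.sum_eq_zero fun i _ => by
        apply Set.indicator_of_notMem; intro h; cases h
    have S1 : ∑ i : Fin n,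
        Set.indicator {e' : (wheel n).E | (wheel n).src e' = none} (wflow n r) (Sum.inl i) = 0 :=
      Finset.sum_eq_zero fun i _ => by
        apply Set.indicator_of_notMem; intro h; cases h
    have S2 : ∑ i : Fin n,
        Set.indicator {e' : (wheel n).E | (wheel n).src e' = none} (wflow n r) (Sum.inr i)
        = ∑ i : Fin n, (r i - r (i - 1)) :=
      Finset.sum_congr rfl fun i _ => by
        refine Set.indicator_of_mem ?_ _
        exact rfl
    rw [T1, T2, S1, S2, Finset.sum_sub_distrib,
      show ∑ i : Fin n, r (i - 1) = ∑ i : Fin n, r i from Equiv.sum_comp (Equiv.subRight 1) r,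
      sub_self]
  | some j =>
    have T1 : ∑ i : Fin n,
        Set.indicator {e' : (wheel n).E | (wheel n).tgt e' = some j} (wflow n r) (Sum.inl i)
        = wflow n r (Sum.inl (j - 1)) := by
      refine Finset.sum_eq_single_of_mem (j - 1) (Finset.mem_univ _) ?_ |>.trans ?_
      · intro b _ hb
        apply Set.indicator_of_notMem
        intro h
        exact hb (eq_sub_of_add_eq (by rw [← rot_eq n hn b]; exact Option.some.inj h))
      · refine Set.indicator_of_mem ?_ _
        show some (rot n (j - 1)) = some j
        rw [rot_eq n hn, fin_sub_add_cancel]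
    have T2 : ∑ i : Fin n,
        Set.indicator {e' : (wheel n).E | (wheel n).tgt e' = some j} (wflow n r) (Sum.inr i)
        = wflow n r (Sum.inr j) := by
      refine Finset.sum_eq_single_of_mem j (Finset.mem_univ _) ?_ |>.trans ?_
      · intro b _ hb
        apply Set.indicator_of_notMem
        intro h
        exact hb (Option.some.inj h)
      · refine Set.indicator_of_mem ?_ _
        exact rfl
    have S1 : ∑ i : Fin n,
        Set.indicator {e' : (wheel n).E | (wheel n).src e' = some j} (wflow n r) (Sum.inl i)
        = wflow n r (Sum.inl j) := by
      refine Finset.sum_eq_single_of_mem j (Finset.mem_univ _) ?_ |>.trans ?_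
      · intro b _ hb
        apply Set.indicator_of_notMem
        intro h
        exact hb (Option.some.inj h)
      · refine Set.indicator_of_mem ?_ _
        exact rfl
    have S2 : ∑ i : Fin n,
        Set.indicator {e' : (wheel n).E | (wheel n).src e' = some j} (wflow n r) (Sum.inr i) = 0 :=
      Finset.sum_eq_zero fun i _ => by
        apply Set.indicator_of_notMem; intro h; cases h
    rw [T1, T2, S1, S2]
    show r (j - 1) + (r j - r (j - 1)) = r j + 0
    abel

lemma exists_rim (n : ℕ) (J : Set (wheel n).E)
    (hJ : (wheel n).IsEvenSubgraph J) (hJne : J.Nonempty) : ∃ i, Sum.inl i ∈ J := by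
  by_contra hno
  push_neg at hno
  obtain ⟨e, he⟩ := hJne
  match e with
  | Sum.inl i => exact hno i he
  | Sum.inr i =>
    have h := hJ (some i)
    haveI h0 : IsEmpty {e : (wheel n).E // e ∈ J ∧ (wheel n).src e = some i} := by
      constructor
      rintro ⟨e, heJ, hsrc⟩
      match e with
      | Sum.inl j => exact hno j heJ
      | Sum.inr j => cases hsrc
    haveI h1 : Unique {e : (wheel n).E // e ∈ J ∧ (wheel n).tgt e = some i} := by
      refine ⟨⟨⟨Sum.inr i, he, rfl⟩⟩, ?_⟩
      rintro ⟨e, heJ, htgt⟩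
      apply Subtype.ext
      show e = Sum.inr i
      match e with
      | Sum.inl j => exact absurd heJ (hno j)
      | Sum.inr j => exact congrArg Sum.inr (Option.some.inj htgt)
    rw [Nat.card_of_isEmpty, Nat.card_unique] at h
    simp at h

noncomputable def va : AddCircle (5:ℝ) := ((3/2 : ℝ) : AddCircle (5:ℝ))
noncomputable def vb : AddCircle (5:ℝ) := ((10/3 : ℝ) : AddCircle (5:ℝ))
noncomputable def vw : AddCircle (5:ℝ) := ((1/6 : ℝ) : AddCircle (5:ℝ))

noncomputable def gv (n : ℕ) (m : ℕ) : AddCircle (5:ℝ) :=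
  if m = 0 ∧ Odd n then vw else if m % 2 = 1 then va else vb

lemma mem_arc14 (t : ℝ) (h1 : 1 < t) (h4 : t < 4) : (t : AddCircle (5:ℝ)) ∈ arc 1 4 := by
  refine mem_arc 1 4 t (by exact_mod_cast h1) ?_
  rw [show arcEnd 1 4 = 4 by decide]
  exact_mod_cast h4

lemma mem_arc12 (t : ℝ) (h1 : 1 < t) (h2 : t < 2) : (t : AddCircle (5:ℝ)) ∈ arc 1 2 := by
  refine mem_arc 1 2 t (by exact_mod_cast h1) ?_
  rw [show arcEnd 1 2 = 2 by decide]
  exact_mod_cast h2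

lemma mem_arc34 (t : ℝ) (h1 : 3 < t) (h2 : t < 4) : (t : AddCircle (5:ℝ)) ∈ arc 3 4 := by
  refine mem_arc 3 4 t (by exact_mod_cast h1) ?_
  rw [show arcEnd 3 4 = 4 by decide]
  exact_mod_cast h2

lemma mem_arc01 (t : ℝ) (h1 : 0 < t) (h2 : t < 1) : (t : AddCircle (5:ℝ)) ∈ arc 0 1 := by
  refine mem_arc 0 1 t (by exact_mod_cast h1) ?_
  rw [show arcEnd 0 1 = 1 by decide]
  exact_mod_cast h2

lemma diff_vb_va : vb - va = ((11/6 : ℝ) : AddCircle (5:ℝ)) := by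
  rw [va, vb, coe_sub5]
  norm_num
lemma diff_va_vb : va - vb = ((19/6 : ℝ) : AddCircle (5:ℝ)) := by
  rw [va, vb, coe_sub5, show (3/2 - 10/3 : ℝ) = 19/6 - 5 by norm_num]
  exact (q5_eq (19/6) (19/6 - 5) (by norm_num)).symm
lemma diff_vw_vb : vw - vb = ((11/6 : ℝ) : AddCircle (5:ℝ)) := by
  rw [vw, vb, coe_sub5, show (1/6 - 10/3 : ℝ) = 11/6 - 5 by norm_num]
  exact (q5_eq (11/6) (11/6 - 5) (by norm_num)).symm
lemma diff_va_vw : va - vw = ((4/3 : ℝ) : AddCircle (5:ℝ)) := by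
  rw [va, vw, coe_sub5]
  norm_num

lemma gv_eval_w (n m : ℕ) (h : m = 0) (ho : Odd n) : gv n m = vw := by
  rw [gv, if_pos ⟨h, ho⟩]

lemma gv_eval_a (n m : ℕ) (h : m % 2 = 1) : gv n m = va := by
  rw [gv, if_neg, if_pos h]
  rintro ⟨h0, -⟩
  omega

lemma gv_eval_b (n m : ℕ) (hm : ¬(m = 0 ∧ Odd n)) (h : m % 2 = 0) : gv n m = vb := by
  rw [gv, if_neg hm, if_neg (by omega)]

lemma spoke_val (n : ℕ) (hn : 3 ≤ n) [NeZero n] (i0 i : Fin n) :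
    (gv n ((i - i0).val) - gv n ((i - 1 - i0).val)) ∈
      ({((11/6:ℝ) : AddCircle (5:ℝ)), ((19/6:ℝ) : AddCircle (5:ℝ)),
        ((4/3:ℝ) : AddCircle (5:ℝ))} : Set (AddCircle (5:ℝ))) := by
  have hrw : i - 1 - i0 = (i - i0) - 1 := sub_right_comm i 1 i0
  rw [hrw]
  set k : Fin n := i - i0 with hk
  rw [sub_one_val n (by omega) k]
  by_cases hk0 : k.val = 0
  · rw [if_pos hk0, hk0]
    rcases Nat.even_or_odd n with he | ho
    · have hne : n % 2 = 0 := Nat.even_iff.mp he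
      have hno : ¬ Odd n := by rw [Nat.odd_iff]; omega
      rw [gv_eval_b n 0 (by tauto) (by norm_num), gv_eval_a n (n-1) (by omega), diff_vb_va]
      exact Set.mem_insert _ _
    · have hno : n % 2 = 1 := Nat.odd_iff.mp ho
      rw [gv_eval_w n 0 rfl ho, gv_eval_b n (n-1) (by rintro ⟨h0, -⟩; omega) (by omega),
        diff_vw_vb]
      exact Set.mem_insert _ _
  · rw [if_neg hk0]
    by_cases hk1 : k.val = 1
    · rw [hk1]
      rcases Nat.even_or_odd n with he | ho
      · have hne : n % 2 = 0 := Nat.even_iff.mp he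
        have hno : ¬ Odd n := by rw [Nat.odd_iff]; omega
        rw [gv_eval_a n 1 (by norm_num), gv_eval_b n (1-1) (by tauto) (by norm_num), diff_va_vb]
        exact Set.mem_insert_of_mem _ (Set.mem_insert _ _)
      · rw [gv_eval_a n 1 (by norm_num), gv_eval_w n (1-1) rfl ho, diff_va_vw]
        exact Set.mem_insert_of_mem _ (Set.mem_insert_of_mem _ rfl)
    · have hk2 : 2 ≤ k.val := by omega
      rcases Nat.even_or_odd k.val with he | ho
      · have hke : k.val % 2 = 0 := Nat.even_iff.mp he
        rw [gv_eval_b n k.val (by tauto) hke, gv_eval_a n (k.val - 1) (by omega), diff_vb_va]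
        exact Set.mem_insert _ _
      · have hko : k.val % 2 = 1 := Nat.odd_iff.mp ho
        rw [gv_eval_a n k.val hko,
          gv_eval_b n (k.val - 1) (by rintro ⟨h0, -⟩; omega) (by omega), diff_va_vb]
        exact Set.mem_insert_of_mem _ (Set.mem_insert _ _)

end AuxProof

/-- for every `A ∈ SI_5` with `Me A ≥ 4`, every `n ≥ 3`, and every
nonempty even subgraph `J` of the wheel `W_n`, the wheel admits a
`σ_{J,A}`-faithful flow. -/
theorem wheel_measure_ge_four_hasFaithful (A : Set (AddCircle (5 : ℝ)))
    (hA : A ∈ SI5) (hMe : 4 ≤ Me A) (n : ℕ) (hn : 3 ≤ n)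
    (J : Set (wheel n).E) (hJ : (wheel n).IsEvenSubgraph J) (hJne : J.Nonempty) :
    (wheel n).HasFaithfulOn J A := by
  classical
  obtain ⟨h01, h12, h34⟩ := A_arcs A hA hMe
  haveI : NeZero n := ⟨by omega⟩
  obtain ⟨i0, hi0⟩ := exists_rim n J hJ hJne
  set rf : Fin n → AddCircle (5:ℝ) := fun i => gv n ((i - i0).val) with hrf
  have hva : va ∈ A := h12 (by rw [va]; exact mem_arc12 (3/2) (by norm_num) (by norm_num))
  have hvb : vb ∈ A := h34 (by rw [vb]; exact mem_arc34 (10/3) (by norm_num) (by norm_num))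
  have hvw : vw ∈ A := h01 (by rw [vw]; exact mem_arc01 (1/6) (by norm_num) (by norm_num))
  have hva14 : va ∈ arc 1 4 := by rw [va]; exact mem_arc14 (3/2) (by norm_num) (by norm_num)
  have hvb14 : vb ∈ arc 1 4 := by rw [vb]; exact mem_arc14 (10/3) (by norm_num) (by norm_num)
  have hspokeA : ∀ i : Fin n, rf i - rf (i - 1) ∈ A := by
    intro i
    have h := spoke_val n hn i0 i
    have hr : rf i - rf (i - 1) = gv n ((i - i0).val) - gv n ((i - 1 - i0).val) := rfl
    rw [hr]
    rcases h with h | h | h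
    · rw [h]; exact h12 (mem_arc12 (11/6) (by norm_num) (by norm_num))
    · rw [h]; exact h34 (mem_arc34 (19/6) (by norm_num) (by norm_num))
    · rw [h]; exact h12 (mem_arc12 (4/3) (by norm_num) (by norm_num))
  have hspoke14 : ∀ i : Fin n, rf i - rf (i - 1) ∈ arc 1 4 := by
    intro i
    have h := spoke_val n hn i0 i
    have hr : rf i - rf (i - 1) = gv n ((i - i0).val) - gv n ((i - 1 - i0).val) := rfl
    rw [hr]
    rcases h with h | h | h
    · rw [h]; exact mem_arc14 (11/6) (by norm_num) (by norm_num)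
    · rw [h]; exact mem_arc14 (19/6) (by norm_num) (by norm_num)
    · rw [h]; exact mem_arc14 (4/3) (by norm_num) (by norm_num)
  refine ⟨wflow n rf, wflow_isFlow n (by omega) rf, ?_, ?_⟩
  · intro e _
    match e with
    | Sum.inl i =>
      show gv n ((i - i0).val) ∈ A
      unfold gv
      split_ifs with h1 h2
      · exact hvw
      · exact hva
      · exact hvb
    | Sum.inr i => exact hspokeA i
  · intro e he
    match e with
    | Sum.inl i =>
      show gv n ((i - i0).val) ∈ arc 1 4
      unfold gv
      split_ifs with h1 h2
      · exfalso
        have hiz : i - i0 = 0 := Fin.ext (by simpa using h1.1)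
        have : i = i0 := sub_eq_zero.mp hiz
        exact he (by rw [this]; exact hi0)
      · exact hva14
      · exact hvb14
    | Sum.inr i => exact hspoke14 i
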